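/- arXiv:2303.01135 — 5 statements merged into one kernel-verified Lean document; each statement's English description precedes it below -/
import Mathlib

section
/- Let F : ℝ^d → ℝ be convex, nonnegative, differentiable and β-smooth, and consider gradient descent w_{t+1} = w_t − η∇F(w_t) with w_1 = 0 and step size η ≤ 1/β. If w* satisfies F(w*) ≤ ε, then for every T, ‖w_T − w*‖² ≤ ‖w*‖² + 2ηεT, and hence ‖w_T‖ ≤ 2‖w*‖ + 2√(ηεT). -/
/-!
Fix the comparator `w*`. Convexity gives `⟪∇F(w), w - w*⟫ ≥ F(w) - F(w*)`, and the descent lemma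
applied at `w - β⁻¹ ∇F(w)` together with `F ≥ 0` gives `‖∇F(w)‖² ≤ 2β F(w)`. Expanding the square,
one gradient step therefore changes `‖w - w*‖²` by at most
`-2η (F(w) - F(w*)) + 2η²β F(w) ≤ 2η F(w*) ≤ 2ηε` when `ηβ ≤ 1`. Summing over the steps bounds
`‖w_T - w*‖²`, and the bound on `‖w_T‖` follows by the triangle inequality.
-/

open Set AffineMap RealInnerProductSpace

theorem norm_le_two_mul_add_two_mul_sqrt {E : Type*} [SeminormedAddCommGroup E] {a b : E} {c : ℝ}
    (hc : 0 ≤ c) (h : ‖a - b‖ ^ 2 ≤ ‖b‖ ^ 2 + 4 * c) :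
    ‖a‖ ≤ 2 * ‖b‖ + 2 * √c := by
  have hsq := Real.sq_sqrt hc
  have hab : ‖a - b‖ ≤ ‖b‖ + 2 * √c := by
    refine le_of_sq_le_sq ?_ (by positivity)
    nlinarith [norm_nonneg b, Real.sqrt_nonneg c, mul_nonneg (norm_nonneg b) (Real.sqrt_nonneg c)]
  calc ‖a‖ ≤ ‖b‖ + ‖a - b‖ := norm_le_norm_add_norm_sub' a b
    _ ≤ 2 * ‖b‖ + 2 * √c := by linarith

section

variable {E : Type*} [NormedAddCommGroup E] [InnerProductSpace ℝ E] [CompleteSpace E]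

theorem HasGradientAt.hasDerivAt_comp_lineMap {f : E → ℝ} {g x y : E} {t : ℝ}
    (hf : HasGradientAt f g (lineMap x y t)) :
    HasDerivAt (fun s ↦ f (lineMap x y s)) ⟪g, y - x⟫ t :=
  hf.hasFDerivAt.comp_hasDerivAt t hasDerivAt_lineMap

theorem ConvexOn.add_inner_gradient_le {s : Set E} {f : E → ℝ} {g x y : E}
    (hf : ConvexOn ℝ s f) (hx : x ∈ s) (hy : y ∈ s) (hg : HasGradientAt f g x) :
    f x + ⟪g, y - x⟫ ≤ f y := by
  have hline : ConvexOn ℝ (Icc (0 : ℝ) 1) (fun t ↦ f (lineMap x y t)) :=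
    (hf.comp_affineMap (lineMap x y)).subset (fun t ht ↦ hf.1.lineMap_mem hx hy ht)
      (convex_Icc 0 1)
  have hderiv : HasDerivAt (fun t : ℝ ↦ f (lineMap x y t)) ⟪g, y - x⟫ 0 :=
    HasGradientAt.hasDerivAt_comp_lineMap (by simpa using hg)
  have hle_slope := hline.le_slope_of_hasDerivAt (left_mem_Icc.2 zero_le_one)
    (right_mem_Icc.2 zero_le_one) zero_lt_one hderiv
  simp only [slope_def_field, lineMap_apply_one, lineMap_apply_zero, sub_zero, div_one]
    at hle_slope
  linarith

theorem le_add_inner_gradient_add_sq_of_lipschitz {f : E → ℝ} {g : E → E} {β : ℝ}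
    (hf : ∀ x, HasGradientAt f (g x) x) (hg : ∀ u v, ‖g u - g v‖ ≤ β * ‖u - v‖) (x y : E) :
    f y ≤ f x + ⟪g x, y - x⟫ + β / 2 * ‖y - x‖ ^ 2 := by
  set χ : ℝ → ℝ := fun t ↦ f (lineMap x y t) - t * ⟪g x, y - x⟫ - β / 2 * t ^ 2 * ‖y - x‖ ^ 2
  have hχ : ∀ t, HasDerivAt χ
      (⟪g (lineMap x y t), y - x⟫ - ⟪g x, y - x⟫ - β * t * ‖y - x‖ ^ 2) t := by
    intro t
    exact ((((hf (lineMap x y t)).hasDerivAt_comp_lineMap (x := x) (y := y))).sub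
      ((hasDerivAt_id t).mul_const ⟪g x, y - x⟫)).sub
      (((hasDerivAt_pow 2 t).const_mul (β / 2)).mul_const (‖y - x‖ ^ 2)) |>.congr_deriv (by ring)
  have hslope : ∀ t ∈ interior (Icc (0 : ℝ) 1),
      ⟪g (lineMap x y t), y - x⟫ - ⟪g x, y - x⟫ - β * t * ‖y - x‖ ^ 2 ≤ 0 := by
    intro t ht
    rw [interior_Icc] at ht
    calc ⟪g (lineMap x y t), y - x⟫ - ⟪g x, y - x⟫ - β * t * ‖y - x‖ ^ 2
        = ⟪g (lineMap x y t) - g x, y - x⟫ - β * t * ‖y - x‖ ^ 2 := by rw [inner_sub_left]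
      _ ≤ β * ‖lineMap x y t - x‖ * ‖y - x‖ - β * t * ‖y - x‖ ^ 2 := by
        gcongr
        exact (real_inner_le_norm _ _).trans (by gcongr; exact hg _ _)
      _ = 0 := by
        rw [← dist_eq_norm, dist_lineMap_left, dist_eq_norm', Real.norm_of_nonneg ht.1.le]
        ring
  have hanti : AntitoneOn χ (Icc 0 1) :=
    antitoneOn_of_hasDerivWithinAt_nonpos (convex_Icc 0 1)
      (HasDerivAt.continuousOn fun t _ ↦ hχ t)
      (fun t _ ↦ (hχ t).hasDerivWithinAt) hslope
  have hχ_le := hanti (left_mem_Icc.2 zero_le_one) (right_mem_Icc.2 zero_le_one) zero_le_one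
  simp only [χ, lineMap_apply_zero, lineMap_apply_one] at hχ_le
  linarith

theorem norm_sq_gradient_le_of_nonneg {f : E → ℝ} {g : E → E} {β : ℝ} (hβ : 0 < β)
    (hf : ∀ x, HasGradientAt f (g x) x) (hg : ∀ u v, ‖g u - g v‖ ≤ β * ‖u - v‖)
    (hf₀ : ∀ x, 0 ≤ f x) (x : E) :
    ‖g x‖ ^ 2 ≤ 2 * β * f x := by
  have hdescent := le_add_inner_gradient_add_sq_of_lipschitz hf hg x (x - β⁻¹ • g x)
  rw [sub_sub_cancel_left, inner_neg_right, real_inner_smul_right, real_inner_self_eq_norm_sq,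
    norm_neg, norm_smul, Real.norm_of_nonneg (inv_nonneg.2 hβ.le)] at hdescent
  have hrhs : f x + -(β⁻¹ * ‖g x‖ ^ 2) + β / 2 * (β⁻¹ * ‖g x‖) ^ 2
      = f x - ‖g x‖ ^ 2 / (2 * β) := by
    field_simp
    ring
  have : ‖g x‖ ^ 2 / (2 * β) ≤ f x := by
    linarith [hf₀ (x - β⁻¹ • g x)]
  rwa [div_le_iff₀ (by positivity), mul_comm] at this

theorem norm_sub_smul_gradient_sub_sq_le {f : E → ℝ} {g : E → E} {β η : ℝ}
    (hconv : ConvexOn ℝ univ f) (hf : ∀ x, HasGradientAt f (g x) x)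
    (hg : ∀ u v, ‖g u - g v‖ ≤ β * ‖u - v‖) (hf₀ : ∀ x, 0 ≤ f x)
    (hη : 0 < η) (hηβ : η ≤ 1 / β) (x z : E) :
    ‖x - η • g x - z‖ ^ 2 ≤ ‖x - z‖ ^ 2 + 2 * η * f z := by
  have hβ : 0 < β := one_div_pos.1 (hη.trans_le hηβ)
  have hconv_x := hconv.add_inner_gradient_le (mem_univ x) (mem_univ z) (hf x)
  have hgrad_sq := norm_sq_gradient_le_of_nonneg hβ hf hg hf₀ x
  have hexpand : ‖x - η • g x - z‖ ^ 2
      = ‖x - z‖ ^ 2 + 2 * η * ⟪g x, z - x⟫ + η ^ 2 * ‖g x‖ ^ 2 := by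
    have hinner : ⟪g x, z - x⟫ = -⟪x - z, g x⟫ := by
      rw [real_inner_comm, ← inner_neg_left, neg_sub]
    rw [show x - η • g x - z = (x - z) - η • g x by abel, norm_sub_sq_real, real_inner_smul_right,
      norm_smul, Real.norm_of_nonneg hη.le, hinner]
    ring
  have hdamp : 0 ≤ 2 * η * (1 - η * β) * f x :=
    mul_nonneg (mul_nonneg (by positivity) (sub_nonneg.2 ((le_div_iff₀ hβ).1 hηβ))) (hf₀ x)
  calc ‖x - η • g x - z‖ ^ 2
      = ‖x - z‖ ^ 2 + 2 * η * ⟪g x, z - x⟫ + η ^ 2 * ‖g x‖ ^ 2 := hexpand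
    _ ≤ ‖x - z‖ ^ 2 + 2 * η * (f z - f x) + η ^ 2 * (2 * β * f x) := by
      gcongr
      linarith
    _ = ‖x - z‖ ^ 2 + 2 * η * f z - 2 * η * (1 - η * β) * f x := by ring
    _ ≤ ‖x - z‖ ^ 2 + 2 * η * f z := by linarith

end

theorem gd_norm_bound_general {d : ℕ}
    (F : EuclideanSpace ℝ (Fin d) → ℝ)
    (g : EuclideanSpace ℝ (Fin d) → EuclideanSpace ℝ (Fin d))
    (β η ε : ℝ) (hη : 0 < η) (hηβ : η ≤ 1 / β)
    (hconv : ConvexOn ℝ Set.univ F)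
    (hnonneg : ∀ w, 0 ≤ F w)
    (hgrad : ∀ w, HasGradientAt F (g w) w)
    (hlip : ∀ u v, ‖g u - g v‖ ≤ β * ‖u - v‖)
    (w : ℕ → EuclideanSpace ℝ (Fin d))
    (hw1 : w 1 = 0)
    (hupd : ∀ t, 1 ≤ t → w (t + 1) = w t - η • g (w t))
    (wstar : EuclideanSpace ℝ (Fin d)) (hstar : F wstar ≤ ε) :
    ∀ T : ℕ, 1 ≤ T →
      ‖w T - wstar‖ ^ 2 ≤ ‖wstar‖ ^ 2 + 2 * η * ε * T ∧
      ‖w T‖ ≤ 2 * ‖wstar‖ + 2 * Real.sqrt (η * ε * T) := by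
  have hηε : 0 ≤ η * ε := mul_nonneg hη.le ((hnonneg wstar).trans hstar)
  have hdist : ∀ T, 1 ≤ T → ‖w T - wstar‖ ^ 2 ≤ ‖wstar‖ ^ 2 + 2 * η * ε * (T - 1) := by
    intro T hT
    induction T, hT using Nat.le_induction with
    | base => simp [hw1]
    | succ t ht ih =>
      have hstep := norm_sub_smul_gradient_sub_sq_le hconv hgrad hlip hnonneg hη hηβ (w t) wstar
      rw [hupd t ht]
      have hηF := mul_le_mul_of_nonneg_left hstar hη.le
      push_cast
      linarith
  intro T hT
  have hηεT : 0 ≤ η * ε * T := mul_nonneg hηε T.cast_nonneg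
  have hdist_T : ‖w T - wstar‖ ^ 2 ≤ ‖wstar‖ ^ 2 + 2 * η * ε * T := by
    linarith [hdist T hT]
  exact ⟨hdist_T, norm_le_two_mul_add_two_mul_sqrt hηεT (by linarith)⟩

theorem gd_norm_bound {d : ℕ}
    (F : EuclideanSpace ℝ (Fin d) → ℝ)
    (g : EuclideanSpace ℝ (Fin d) → EuclideanSpace ℝ (Fin d))
    (β η ε : ℝ) (hβ : 0 < β) (hη : 0 < η) (hηβ : η ≤ 1 / β) (hε : 0 < ε)
    (hconv : ConvexOn ℝ Set.univ F)
    (hnonneg : ∀ w, 0 ≤ F w)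
    (hgrad : ∀ w, HasGradientAt F (g w) w)
    (hlip : ∀ u v, ‖g u - g v‖ ≤ β * ‖u - v‖)
    (w : ℕ → EuclideanSpace ℝ (Fin d))
    (hw1 : w 1 = 0)
    (hupd : ∀ t, 1 ≤ t → w (t + 1) = w t - η • g (w t))
    (wstar : EuclideanSpace ℝ (Fin d)) (hstar : F wstar ≤ ε) :
    ∀ T : ℕ, 1 ≤ T →
      ‖w T - wstar‖ ^ 2 ≤ ‖wstar‖ ^ 2 + 2 * η * ε * T ∧
      ‖w T‖ ≤ 2 * ‖wstar‖ + 2 * Real.sqrt (η * ε * T) :=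
  gd_norm_bound_general F g β η ε hη hηβ hconv hnonneg hgrad hlip w hw1 hupd wstar hstar
end

section
/- Let F : ℝ^d → ℝ be convex, nonnegative, differentiable and β-smooth, and run gradient descent w_{t+1} = w_t − η∇F(w_t) with w_1 = 0 and η ≤ 1/(2β). If F(w*) ≤ ε, then F(w_T) ≤ ‖w*‖²/(ηT) + 2ε. -/
/-!
One gradient step with `β η ≤ 1` combines the convexity inequality at `w*` with the descent lemma
into `‖w' - w*‖² + 2η F(w') ≤ ‖w - w*‖² + 2η F(w*)`. Since `F` also decreases along the iterates,
the potential `‖w_t - w*‖² + 2η (t - 1) F(w_t)` grows by at most `2η F(w*)` per step, which gives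
`F(w_T) ≤ ‖w*‖² / (2η (T - 1)) + F(w*)` for `T ≥ 2`. The first iterate is handled by the
self-bounding property `‖∇F‖² ≤ 2β F` of nonnegative smooth functions, which yields
`F y ≤ 2 F x + β ‖y - x‖²`.
-/

open RealInnerProductSpace Set

variable {E : Type*} [NormedAddCommGroup E] [InnerProductSpace ℝ E] [CompleteSpace E]
  {F : E → ℝ} {g : E → E}

theorem hasDerivAt_comp_add_smul_of_hasGradientAt {x h g' : E} {t : ℝ}
    (hF : HasGradientAt F g' (x + t • h)) :
    HasDerivAt (fun s : ℝ => F (x + s • h)) ⟪g', h⟫ t := by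
  have hline : HasDerivAt (fun s : ℝ => x + s • h) h t := by
    simpa using ((hasDerivAt_id t).smul_const h).const_add x
  simpa [Function.comp_def] using hF.hasFDerivAt.comp_hasDerivAt t hline

theorem le_add_inner_gradient_add_sq {β : ℝ} (hgrad : ∀ x, HasGradientAt F (g x) x)
    (hlip : ∀ x y, ‖g x - g y‖ ≤ β * ‖x - y‖) (x y : E) :
    F y ≤ F x + ⟪g x, y - x⟫ + β / 2 * ‖y - x‖ ^ 2 := by
  set h := y - x
  let φ : ℝ → ℝ := fun t => F (x + t • h) - t * ⟪g x, h⟫ - β / 2 * ‖h‖ ^ 2 * t ^ 2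
  have hφ (t : ℝ) : HasDerivAt φ (⟪g (x + t • h) - g x, h⟫ - β * ‖h‖ ^ 2 * t) t := by
    refine (((hasDerivAt_comp_add_smul_of_hasGradientAt (hgrad _)).sub
      ((hasDerivAt_id t).mul_const ⟪g x, h⟫)).sub
      ((hasDerivAt_pow 2 t).const_mul (β / 2 * ‖h‖ ^ 2))).congr_deriv ?_
    simp only [inner_sub_left, one_mul]
    ring
  have hφ_nonpos (t : ℝ) (ht : 0 ≤ t) : ⟪g (x + t • h) - g x, h⟫ - β * ‖h‖ ^ 2 * t ≤ 0 := by
    have := (real_inner_le_norm _ _).trans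
      (mul_le_mul_of_nonneg_right (hlip (x + t • h) x) (norm_nonneg h))
    rw [add_sub_cancel_left, norm_smul, Real.norm_of_nonneg ht] at this
    linarith
  have hanti : AntitoneOn φ (Ici 0) :=
    antitoneOn_of_hasDerivWithinAt_nonpos (convex_Ici 0)
      (fun t _ => (hφ t).continuousAt.continuousWithinAt)
      (fun t _ => (hφ t).hasDerivWithinAt)
      (fun t ht => hφ_nonpos t (interior_subset ht))
  have := hanti self_mem_Ici (show (0 : ℝ) ≤ 1 from zero_le_one) zero_le_one
  simp only [φ, one_smul, zero_smul, add_zero, one_mul, zero_mul, one_pow, mul_one, sub_zero,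
    add_sub_cancel, h] at this
  linarith

theorem ConvexOn.add_inner_gradient_le_s4 (hconv : ConvexOn ℝ univ F) {x g' : E}
    (hF : HasGradientAt F g' x) (y : E) : F x + ⟪g', y - x⟫ ≤ F y := by
  have hconv_line : ConvexOn ℝ univ (fun s : ℝ => F (x + s • (y - x))) := by
    simpa [Function.comp_def, AffineMap.lineMap_apply_module', add_comm] using
      hconv.comp_affineMap (AffineMap.lineMap x y)
  have hderiv : HasDerivAt (fun s : ℝ => F (x + s • (y - x))) ⟪g', y - x⟫ 0 :=
    hasDerivAt_comp_add_smul_of_hasGradientAt (by simpa using hF)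
  have hslope := hconv_line.le_slope_of_hasDerivAt (mem_univ 0) (mem_univ 1) one_pos hderiv
  simp only [slope_def_field, one_smul, zero_smul, add_zero, add_sub_cancel, sub_zero,
    div_one] at hslope
  linarith

theorem apply_gradient_step_le {β : ℝ} (hgrad : ∀ x, HasGradientAt F (g x) x)
    (hlip : ∀ x y, ‖g x - g y‖ ≤ β * ‖x - y‖) (η : ℝ) (x : E) :
    F (x - η • g x) ≤ F x - η * (1 - β * η / 2) * ‖g x‖ ^ 2 := by
  have := le_add_inner_gradient_add_sq hgrad hlip x (x - η • g x)
  rw [sub_sub_cancel_left, inner_neg_right, real_inner_smul_right, real_inner_self_eq_norm_sq,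
    norm_neg, norm_smul, mul_pow, Real.norm_eq_abs, sq_abs] at this
  linarith

theorem sq_norm_gradient_le {β : ℝ} (hβ : 0 < β) (hnonneg : ∀ x, 0 ≤ F x)
    (hgrad : ∀ x, HasGradientAt F (g x) x) (hlip : ∀ x y, ‖g x - g y‖ ≤ β * ‖x - y‖) (x : E) :
    ‖g x‖ ^ 2 ≤ 2 * β * F x := by
  have := (hnonneg _).trans (apply_gradient_step_le hgrad hlip β⁻¹ x)
  field_simp at this
  linarith

theorem le_two_mul_add_sq {β : ℝ} (hβ : 0 < β) (hnonneg : ∀ x, 0 ≤ F x)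
    (hgrad : ∀ x, HasGradientAt F (g x) x) (hlip : ∀ x y, ‖g x - g y‖ ≤ β * ‖x - y‖) (x y : E) :
    F y ≤ 2 * F x + β * ‖y - x‖ ^ 2 := by
  have hdescent := le_add_inner_gradient_add_sq hgrad hlip x y
  have hcs := real_inner_le_norm (g x) (y - x)
  have hgrad_sq := sq_norm_gradient_le hβ hnonneg hgrad hlip x
  -- Young: `2β ‖g x‖ ‖y - x‖ ≤ ‖g x‖² + β² ‖y - x‖²`
  have hyoung := sq_nonneg (‖g x‖ - β * ‖y - x‖)
  have : β * (‖g x‖ * ‖y - x‖) ≤ β * (F x + β / 2 * ‖y - x‖ ^ 2) := by nlinarith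
  nlinarith [le_of_mul_le_mul_left this hβ]

theorem norm_gradient_step_sub_sq_add_le {β η : ℝ} (hconv : ConvexOn ℝ univ F)
    (hgrad : ∀ x, HasGradientAt F (g x) x) (hlip : ∀ x y, ‖g x - g y‖ ≤ β * ‖x - y‖)
    (hη : 0 ≤ η) (hβη : β * η ≤ 1) (x z : E) :
    ‖x - η • g x - z‖ ^ 2 + 2 * η * F (x - η • g x) ≤ ‖x - z‖ ^ 2 + 2 * η * F z := by
  have hstep := apply_gradient_step_le hgrad hlip η x
  have hconvex := hconv.add_inner_gradient_le_s4 (hgrad x) z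
  have hexpand : ‖x - η • g x - z‖ ^ 2
      = ‖x - z‖ ^ 2 - 2 * η * ⟪g x, x - z⟫ + η ^ 2 * ‖g x‖ ^ 2 := by
    rw [sub_right_comm, norm_sub_sq_real, real_inner_smul_right, norm_smul, mul_pow,
      Real.norm_eq_abs, sq_abs, real_inner_comm]
    ring
  rw [← neg_sub x z, inner_neg_right] at hconvex
  have hstep_size : η ^ 2 * (β * η - 1) * ‖g x‖ ^ 2 ≤ 0 :=
    mul_nonpos_of_nonpos_of_nonneg (mul_nonpos_of_nonneg_of_nonpos (sq_nonneg η) (by linarith))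
      (sq_nonneg _)
  nlinarith

section GradientDescent

variable {β η : ℝ} {x : ℕ → E}

theorem gradientDescent_potential_le (hconv : ConvexOn ℝ univ F)
    (hgrad : ∀ x, HasGradientAt F (g x) x) (hlip : ∀ x y, ‖g x - g y‖ ≤ β * ‖x - y‖)
    (hη : 0 ≤ η) (hβη : β * η ≤ 1) (hx : ∀ n, x (n + 1) = x n - η • g (x n)) (z : E) (n : ℕ) :
    ‖x n - z‖ ^ 2 + 2 * η * n * F (x n) ≤ ‖x 0 - z‖ ^ 2 + 2 * η * n * F z := by
  induction n with
  | zero => simp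
  | succ n ih =>
    have hstep := norm_gradient_step_sub_sq_add_le hconv hgrad hlip hη hβη (x n) z
    have hdecrease : F (x (n + 1)) ≤ F (x n) := by
      have := apply_gradient_step_le hgrad hlip η (x n)
      rw [hx]
      nlinarith [mul_nonneg (mul_nonneg hη (by linarith : 0 ≤ 1 - β * η / 2)) (sq_nonneg ‖g (x n)‖)]
    rw [← hx] at hstep
    push_cast
    nlinarith [mul_le_mul_of_nonneg_left hdecrease (by positivity : 0 ≤ 2 * η * n)]

theorem gradientDescent_apply_le (hconv : ConvexOn ℝ univ F)
    (hgrad : ∀ x, HasGradientAt F (g x) x) (hlip : ∀ x y, ‖g x - g y‖ ≤ β * ‖x - y‖)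
    (hη : 0 < η) (hβη : β * η ≤ 1) (hx : ∀ n, x (n + 1) = x n - η • g (x n)) (z : E)
    {n : ℕ} (hn : 0 < n) :
    F (x n) ≤ ‖x 0 - z‖ ^ 2 / (2 * η * n) + F z := by
  have := gradientDescent_potential_le hconv hgrad hlip hη.le hβη hx z n
  have hpos : 0 < 2 * η * n := by positivity
  rw [div_add' _ _ _ hpos.ne', le_div_iff₀ hpos]
  nlinarith [sq_nonneg ‖x n - z‖]

end GradientDescent

theorem gd_optimization_error_general {d : ℕ}
    (F : EuclideanSpace ℝ (Fin d) → ℝ)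
    (g : EuclideanSpace ℝ (Fin d) → EuclideanSpace ℝ (Fin d))
    (β η ε : ℝ) (hβ : 0 < β) (hη : 0 < η) (hηβ : η ≤ 1 / (2 * β))
    (hconv : ConvexOn ℝ Set.univ F)
    (hnonneg : ∀ w, 0 ≤ F w)
    (hgrad : ∀ w, HasGradientAt F (g w) w)
    (hlip : ∀ u v, ‖g u - g v‖ ≤ β * ‖u - v‖)
    (w : ℕ → EuclideanSpace ℝ (Fin d))
    (hw1 : w 1 = 0)
    (hupd : ∀ t, 1 ≤ t → w (t + 1) = w t - η • g (w t))
    (wstar : EuclideanSpace ℝ (Fin d)) (hstar : F wstar ≤ ε) :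
    ∀ T : ℕ, 1 ≤ T → F (w T) ≤ ‖wstar‖ ^ 2 / (η * T) + 2 * ε := by
  intro T hT
  obtain ⟨n, rfl⟩ := Nat.exists_eq_add_of_le' hT
  have hε : 0 ≤ ε := (hnonneg wstar).trans hstar
  have hβη : β * η ≤ 1 / 2 := by
    rw [le_div_iff₀ (by positivity)] at hηβ
    linarith
  rcases Nat.eq_zero_or_pos n with rfl | hn
  · have h0 := le_two_mul_add_sq hβ hnonneg hgrad hlip wstar 0
    rw [zero_sub, norm_neg] at h0
    have : β * ‖wstar‖ ^ 2 ≤ ‖wstar‖ ^ 2 / η := by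
      rw [le_div_iff₀ hη]
      nlinarith [sq_nonneg ‖wstar‖]
    simp only [zero_add, hw1, Nat.cast_one, mul_one]
    linarith
  · have h := gradientDescent_apply_le (x := fun n => w (n + 1)) hconv hgrad hlip hη
      (by linarith) (fun n => hupd (n + 1) (by omega)) wstar hn
    simp only [hw1, zero_sub, norm_neg] at h
    have : ‖wstar‖ ^ 2 / (2 * η * n) ≤ ‖wstar‖ ^ 2 / (η * ↑(n + 1)) := by
      apply div_le_div_of_nonneg_left (sq_nonneg _) (by positivity)
      push_cast
      have : (1 : ℝ) ≤ n := by exact_mod_cast hn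
      nlinarith
    linarith

theorem gd_optimization_error {d : ℕ}
    (F : EuclideanSpace ℝ (Fin d) → ℝ)
    (g : EuclideanSpace ℝ (Fin d) → EuclideanSpace ℝ (Fin d))
    (β η ε : ℝ) (hβ : 0 < β) (hη : 0 < η) (hηβ : η ≤ 1 / (2 * β)) (hε : 0 < ε)
    (hconv : ConvexOn ℝ Set.univ F)
    (hnonneg : ∀ w, 0 ≤ F w)
    (hgrad : ∀ w, HasGradientAt F (g w) w)
    (hlip : ∀ u v, ‖g u - g v‖ ≤ β * ‖u - v‖)
    (w : ℕ → EuclideanSpace ℝ (Fin d))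
    (hw1 : w 1 = 0)
    (hupd : ∀ t, 1 ≤ t → w (t + 1) = w t - η • g (w t))
    (wstar : EuclideanSpace ℝ (Fin d)) (hstar : F wstar ≤ ε) :
    ∀ T : ℕ, 1 ≤ T → F (w T) ≤ ‖wstar‖ ^ 2 / (η * T) + 2 * ε :=
  gd_optimization_error_general F g β η ε hβ hη hηβ hconv hnonneg hgrad hlip w hw1 hupd wstar hstar
end

section
/- Let F : ℝ^d → ℝ be convex, differentiable, nonnegative and β-smooth, and let w_1, …, w_T be gradient descent iterates with w_1 = 0 and stepsize η ≤ 1/(2β). Then for every w ∈ ℝ^d, (1/T) Σ_{t=1}^T F(w_t) ≤ ‖w‖²/(ηT) + 2F(w). -/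
/-!
Expanding `‖w_{t+1} - v‖²` and using the first-order convexity inequality gives
`2η (F w_t - F v) ≤ ‖w_t - v‖² - ‖w_{t+1} - v‖² + η² ‖∇F w_t‖²`.
A nonnegative function with `β`-Lipschitz gradient is self-bounding, `‖∇F x‖² ≤ 2β F x`
(evaluate the descent lemma at `x - β⁻¹ ∇F x`), so for `η ≤ 1/(2β)` the last term is at most
`η F w_t` and is absorbed into the left side. Summing over `t` telescopes.
-/

open Set RealInnerProductSpace

variable {E : Type*} [NormedAddCommGroup E] [InnerProductSpace ℝ E]

theorem mul_le_of_gradient_step {F : E → ℝ} {η : ℝ} (hη : 0 ≤ η) {u v g' : E}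
    (hconv : F u + ⟪g', v - u⟫ ≤ F v) (hsmall : η * ‖g'‖ ^ 2 ≤ F u) :
    η * F u ≤ 2 * η * F v + (‖u - v‖ ^ 2 - ‖u - η • g' - v‖ ^ 2) := by
  have hdist : ‖u - η • g' - v‖ ^ 2 = ‖u - v‖ ^ 2 - 2 * η * ⟪g', u - v⟫ + η ^ 2 * ‖g'‖ ^ 2 := by
    rw [sub_right_comm, norm_sub_sq_real, real_inner_smul_right, norm_smul, real_inner_comm,
      Real.norm_of_nonneg hη]
    ring
  have hflip : ⟪g', v - u⟫ = -⟪g', u - v⟫ := by rw [← inner_neg_right, neg_sub]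
  have hsmall' : η * (η * ‖g'‖ ^ 2) ≤ η * F u := mul_le_mul_of_nonneg_left hsmall hη
  have hconv' : η * (F u - F v) ≤ η * ⟪g', u - v⟫ := mul_le_mul_of_nonneg_left (by linarith) hη
  nlinarith

variable [CompleteSpace E] {F : E → ℝ} {g : E → E}

theorem HasGradientAt.hasDerivAt_comp_add_smul {x h g' : E} {s : ℝ}
    (hF : HasGradientAt F g' (x + s • h)) :
    HasDerivAt (fun s : ℝ => F (x + s • h)) ⟪g', h⟫ s := by
  have hline : HasDerivAt (fun s : ℝ => x + s • h) h s := by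
    simpa using ((hasDerivAt_id s).smul_const h).const_add x
  have := hF.hasFDerivAt.comp_hasDerivAt s hline
  simp only [InnerProductSpace.toDual_apply_apply] at this
  exact this

theorem ConvexOn.add_inner_le_of_hasGradientAt (hF : ConvexOn ℝ univ F) {x g' : E}
    (hx : HasGradientAt F g' x) (y : E) :
    F x + ⟪g', y - x⟫ ≤ F y := by
  have hline : ConvexOn ℝ univ (fun s : ℝ => F (x + s • (y - x))) := by
    simpa [Function.comp_def, AffineMap.lineMap_apply, add_comm] using
      hF.comp_affineMap (AffineMap.lineMap x y)
  have hderiv : HasDerivAt (fun s : ℝ => F (x + s • (y - x))) ⟪g', y - x⟫ 0 :=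
    HasGradientAt.hasDerivAt_comp_add_smul (by simpa using hx)
  have hslope := hline.le_slope_of_hasDerivAt (mem_univ 0) (mem_univ 1) one_pos hderiv
  simp only [slope_def_field, one_smul, zero_smul, add_zero, add_sub_cancel, sub_zero,
    div_one] at hslope
  linarith

theorem le_add_inner_add_sq_of_lipschitz_gradient {β : ℝ}
    (hgrad : ∀ z, HasGradientAt F (g z) z) (hlip : ∀ u v, ‖g u - g v‖ ≤ β * ‖u - v‖)
    (x y : E) :
    F y ≤ F x + ⟪g x, y - x⟫ + β / 2 * ‖y - x‖ ^ 2 := by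
  set h := y - x
  set φ : ℝ → ℝ := fun s => F (x + s • h) - s * ⟪g x, h⟫ - β / 2 * s ^ 2 * ‖h‖ ^ 2
  have hφ : ∀ s, HasDerivAt φ (⟪g (x + s • h) - g x, h⟫ - β * s * ‖h‖ ^ 2) s := by
    intro s
    have := (((hgrad (x + s • h)).hasDerivAt_comp_add_smul.sub
      ((hasDerivAt_id s).mul_const ⟪g x, h⟫)).sub
      (((hasDerivAt_pow 2 s).const_mul (β / 2)).mul_const (‖h‖ ^ 2)))
    refine this.congr_deriv ?_
    rw [inner_sub_left]
    push_cast
    ring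
  have hφ_nonpos : ∀ s ∈ interior (Ici (0 : ℝ)),
      ⟪g (x + s • h) - g x, h⟫ - β * s * ‖h‖ ^ 2 ≤ 0 := by
    intro s hs
    rw [interior_Ici, mem_Ioi] at hs
    have hgs : ‖g (x + s • h) - g x‖ ≤ β * (s * ‖h‖) := by
      simpa [norm_smul, abs_of_pos hs] using hlip (x + s • h) x
    refine sub_nonpos.2 ?_
    calc ⟪g (x + s • h) - g x, h⟫ ≤ ‖g (x + s • h) - g x‖ * ‖h‖ := real_inner_le_norm _ _
      _ ≤ β * (s * ‖h‖) * ‖h‖ := by gcongr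
      _ = β * s * ‖h‖ ^ 2 := by ring
  have hanti : AntitoneOn φ (Ici 0) :=
    antitoneOn_of_hasDerivWithinAt_nonpos (convex_Ici 0)
      (fun s _ => (hφ s).continuousAt.continuousWithinAt)
      (fun s _ => (hφ s).hasDerivWithinAt) hφ_nonpos
  have hφ01 := hanti (mem_Ici.2 le_rfl) (mem_Ici.2 zero_le_one) zero_le_one
  simp only [φ, h, one_smul, zero_smul, add_zero, add_sub_cancel] at hφ01
  linarith

theorem norm_sq_le_of_nonneg_of_lipschitz_gradient {β : ℝ} (hβ : 0 < β) (hF : ∀ z, 0 ≤ F z)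
    (hgrad : ∀ z, HasGradientAt F (g z) z) (hlip : ∀ u v, ‖g u - g v‖ ≤ β * ‖u - v‖) (x : E) :
    ‖g x‖ ^ 2 ≤ 2 * β * F x := by
  -- Evaluate the quadratic upper model at its minimiser `x - β⁻¹ • g x`.
  have hmodel := le_add_inner_add_sq_of_lipschitz_gradient hgrad hlip x (x - β⁻¹ • g x)
  rw [sub_sub_cancel_left, inner_neg_right, norm_neg, real_inner_smul_right,
    real_inner_self_eq_norm_sq, norm_smul, Real.norm_of_nonneg (inv_nonneg.2 hβ.le)] at hmodel
  have hmin := hF (x - β⁻¹ • g x)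
  have hdecrease : β / 2 * (β⁻¹ * ‖g x‖) ^ 2 - β⁻¹ * ‖g x‖ ^ 2 = -(‖g x‖ ^ 2 / (2 * β)) := by
    field_simp
    ring
  have key : ‖g x‖ ^ 2 / (2 * β) ≤ F x := by linarith
  rwa [div_le_iff₀ (by positivity), mul_comm] at key

theorem Finset.sum_Icc_one_le_of_le_add_sub {f a : ℕ → ℝ} {c : ℝ} {T : ℕ} (hT : 1 ≤ T)
    (hf : ∀ t ∈ Finset.Icc 1 T, f t ≤ c + (a t - a (t + 1))) :
    ∑ t ∈ Finset.Icc 1 T, f t ≤ T * c + (a 1 - a (T + 1)) := by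
  calc ∑ t ∈ Finset.Icc 1 T, f t ≤ ∑ t ∈ Finset.Icc 1 T, (c - (a (t + 1) - a t)) :=
        Finset.sum_le_sum fun t ht => by linarith [hf t ht]
    _ = T * c + (a 1 - a (T + 1)) := by
        rw [Finset.sum_sub_distrib, Finset.sum_Icc_sub hT, Finset.sum_const, Nat.card_Icc,
          nsmul_eq_mul, Nat.add_sub_cancel]
        ring

theorem gd_average_regret {d : ℕ}
    (F : EuclideanSpace ℝ (Fin d) → ℝ)
    (g : EuclideanSpace ℝ (Fin d) → EuclideanSpace ℝ (Fin d))
    (β η : ℝ) (hβ : 0 < β) (hη : 0 < η) (hηβ : η ≤ 1 / (2 * β))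
    (hconv : ConvexOn ℝ Set.univ F)
    (hnonneg : ∀ w, 0 ≤ F w)
    (hgrad : ∀ w, HasGradientAt F (g w) w)
    (hlip : ∀ u v, ‖g u - g v‖ ≤ β * ‖u - v‖)
    (w : ℕ → EuclideanSpace ℝ (Fin d))
    (hw1 : w 1 = 0)
    (hupd : ∀ t, 1 ≤ t → w (t + 1) = w t - η • g (w t)) :
    ∀ T : ℕ, 1 ≤ T → ∀ v : EuclideanSpace ℝ (Fin d),
      (1 / (T : ℝ)) * ∑ t ∈ Finset.Icc 1 T, F (w t) ≤ ‖v‖ ^ 2 / (η * T) + 2 * F v := by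
  intro T hT v
  have hηβ' : η * (2 * β) ≤ 1 := (le_div_iff₀ (by positivity)).1 hηβ
  have hstep : ∀ t ∈ Finset.Icc 1 T,
      η * F (w t) ≤ 2 * η * F v + (‖w t - v‖ ^ 2 - ‖w (t + 1) - v‖ ^ 2) := by
    intro t ht
    rw [hupd t (Finset.mem_Icc.1 ht).1]
    refine mul_le_of_gradient_step hη.le (hconv.add_inner_le_of_hasGradientAt (hgrad _) v) ?_
    calc η * ‖g (w t)‖ ^ 2 ≤ η * (2 * β * F (w t)) := mul_le_mul_of_nonneg_left
          (norm_sq_le_of_nonneg_of_lipschitz_gradient hβ hnonneg hgrad hlip _) hη.le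
      _ ≤ F (w t) := by nlinarith [hnonneg (w t)]
  have hsum := Finset.sum_Icc_one_le_of_le_add_sub hT hstep
  rw [← Finset.mul_sum, hw1, zero_sub, norm_neg] at hsum
  have hsum' : ∑ t ∈ Finset.Icc 1 T, F (w t) ≤ ‖v‖ ^ 2 / η + 2 * T * F v := by
    rw [div_add' _ _ _ hη.ne', le_div_iff₀ hη]
    nlinarith [sq_nonneg ‖w (T + 1) - v‖]
  calc (1 / (T : ℝ)) * ∑ t ∈ Finset.Icc 1 T, F (w t) ≤ (1 / T) * (‖v‖ ^ 2 / η + 2 * T * F v) :=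
        mul_le_mul_of_nonneg_left hsum' (by positivity)
    _ = ‖v‖ ^ 2 / (η * T) + 2 * F v := by
        have hT0 : (T : ℝ) ≠ 0 := by positivity
        field_simp
end

section
/- Let φ : [0,∞) → ℝ be a nonnegative, 1-Lipschitz, β-smooth, convex, strictly decreasing function with lim_{u→∞} φ(u) = 0, φ(0) ≥ 1/2 and |φ'(0)| ≥ 1/2. Define ℓ(x) = φ(x) for x ≥ 0 and ℓ(x) = φ(0) + φ'(0)·x + (β/2)x² for x < 0. Then ℓ is nonnegative, convex, β-smooth, continuously differentiable, and strictly monotonically decreasing on ℝ. -/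
/-!
The quadratic piece agrees with `φ` to first order at `0`, so the glued function `ℓ` is
differentiable with derivative `φ'` on `[0, ∞)` and `φ' 0 + β x` on `(-∞, 0]`. Both pieces of
this derivative are monotone and `β`-Lipschitz and they meet at `0`, so `ℓ'` is monotone (hence
`ℓ` is convex) and `β`-Lipschitz on all of `ℝ`. Convexity and strict decrease of `φ` force
`φ' 0 ≤ slope φ 0 1 < 0`, which makes the quadratic piece nonnegative and strictly decreasing.
-/

open Set

section Gluing

variable {α γ : Type*} [LinearOrder α] {f g : α → γ} {a : α}

theorem eqOn_ite_le_Ici : EqOn (fun x => if a ≤ x then f x else g x) f (Ici a) :=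
  fun _ hx => if_pos hx

theorem eqOn_ite_le_Iic (ha : f a = g a) :
    EqOn (fun x => if a ≤ x then f x else g x) g (Iic a) := by
  intro x hx
  rcases (mem_Iic.mp hx).lt_or_eq with hx | rfl
  · exact if_neg (not_le.mpr hx)
  · exact (if_pos le_rfl).trans ha

variable [Preorder γ]

theorem monotone_ite_le (hf : MonotoneOn f (Ici a)) (hg : MonotoneOn g (Iic a))
    (ha : f a = g a) : Monotone fun x => if a ≤ x then f x else g x :=
  (hg.congr (eqOn_ite_le_Iic ha).symm).Iic_union_Ici (hf.congr eqOn_ite_le_Ici.symm)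

theorem strictAnti_ite_le (hf : StrictAntiOn f (Ici a)) (hg : StrictAntiOn g (Iic a))
    (ha : f a = g a) : StrictAnti fun x => if a ≤ x then f x else g x :=
  (hg.congr (eqOn_ite_le_Iic ha).symm).Iic_union_Ici (hf.congr eqOn_ite_le_Ici.symm)

end Gluing

section RealGluing

variable {f g f' g' : ℝ → ℝ} {a : ℝ}

theorem hasDerivAt_ite_le (hf : ∀ x, a ≤ x → HasDerivAt f (f' x) x)
    (hg : ∀ x, x ≤ a → HasDerivAt g (g' x) x) (ha : f a = g a) (ha' : f' a = g' a) (x : ℝ) :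
    HasDerivAt (fun x => if a ≤ x then f x else g x) (if a ≤ x then f' x else g' x) x := by
  rcases lt_trichotomy x a with hx | rfl | hx
  · rw [if_neg (not_le.mpr hx)]
    exact (hg x hx.le).congr_of_eventuallyEq <|
      (eqOn_ite_le_Iic ha).eventuallyEq_of_mem (Iic_mem_nhds hx)
  · rw [if_pos le_rfl]
    have hright : HasDerivWithinAt (fun y => if x ≤ y then f y else g y) (f' x) (Ici x) x :=
      (hf x le_rfl).hasDerivWithinAt.congr eqOn_ite_le_Ici (if_pos le_rfl)
    have hleft : HasDerivWithinAt (fun y => if x ≤ y then f y else g y) (f' x) (Iic x) x := by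
      rw [ha']
      exact (hg x le_rfl).hasDerivWithinAt.congr (eqOn_ite_le_Iic ha) (eqOn_ite_le_Iic ha self_mem_Iic)
    simpa only [Iic_union_Ici, hasDerivWithinAt_univ] using hleft.union hright
  · rw [if_pos hx.le]
    exact (hf x hx.le).congr_of_eventuallyEq <|
      eqOn_ite_le_Ici.eventuallyEq_of_mem (Ici_mem_nhds hx)

theorem abs_sub_ite_le_mul {K : ℝ} (hf : ∀ x y, a ≤ x → a ≤ y → |f x - f y| ≤ K * |x - y|)
    (hg : ∀ x y, x ≤ a → y ≤ a → |g x - g y| ≤ K * |x - y|) (ha : f a = g a) (x y : ℝ) :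
    |(if a ≤ x then f x else g x) - (if a ≤ y then f y else g y)| ≤ K * |x - y| := by
  set h := fun x => if a ≤ x then f x else g x
  have hright : ∀ x y, a ≤ x → a ≤ y → |h x - h y| ≤ K * |x - y| := fun x y hx hy => by
    rw [show h x = f x from eqOn_ite_le_Ici hx, show h y = f y from eqOn_ite_le_Ici hy]
    exact hf x y hx hy
  have hleft : ∀ x y, x ≤ a → y ≤ a → |h x - h y| ≤ K * |x - y| := fun x y hx hy => by
    rw [show h x = g x from eqOn_ite_le_Iic ha hx, show h y = g y from eqOn_ite_le_Iic ha hy]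
    exact hg x y hx hy
  have hacross : ∀ x y, x ≤ a → a ≤ y → |h x - h y| ≤ K * |x - y| := fun x y hx hy =>
    calc |h x - h y| ≤ |h x - h a| + |h a - h y| := abs_sub_le _ _ _
      _ ≤ K * |x - a| + K * |a - y| :=
        add_le_add (hleft x a hx le_rfl) (hright a y le_rfl hy)
      _ = K * |x - y| := by
        rw [abs_of_nonpos (sub_nonpos.mpr hx), abs_of_nonpos (sub_nonpos.mpr hy),
          abs_of_nonpos (sub_nonpos.mpr (hx.trans hy))]
        ring
  rcases le_total a x with hx | hx <;> rcases le_total a y with hy | hy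
  · exact hright x y hx hy
  · rw [abs_sub_comm, abs_sub_comm x]; exact hacross y x hy hx
  · exact hacross x y hx hy
  · exact hleft x y hx hy

end RealGluing

theorem ConvexOn.hasDerivAt_neg_of_strictAntiOn {f : ℝ → ℝ} {s : Set ℝ} {f' x y : ℝ}
    (hconv : ConvexOn ℝ s f) (hanti : StrictAntiOn f s) (hx : x ∈ s) (hy : y ∈ s) (hxy : x < y)
    (hf : HasDerivAt f f' x) : f' < 0 :=
  (hconv.le_slope_of_hasDerivAt hx hy hxy hf).trans_lt <| by
    rw [slope_def_field]
    exact div_neg_of_neg_of_pos (sub_neg.mpr (hanti hx hy hxy)) (sub_pos.mpr hxy)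

section Quadratic

variable (c b β : ℝ)

theorem hasDerivAt_quadratic (x : ℝ) :
    HasDerivAt (fun x => c + b * x + β / 2 * x ^ 2) (b + β * x) x := by
  have h : HasDerivAt (fun x => c + b * x + β / 2 * x ^ 2) (b * 1 + β / 2 * (2 * x ^ 1)) x :=
    ((hasDerivAt_id' x).const_mul b).const_add c |>.add ((hasDerivAt_pow 2 x).const_mul (β / 2))
  convert h using 1
  ring

variable {c b β}

theorem quadratic_nonneg_of_nonpos (hc : 0 ≤ c) (hb : b ≤ 0) (hβ : 0 ≤ β) {x : ℝ}
    (hx : x ≤ 0) : 0 ≤ c + b * x + β / 2 * x ^ 2 := by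
  have : 0 ≤ b * x := mul_nonneg_of_nonpos_of_nonpos hb hx
  positivity

theorem strictAntiOn_quadratic (hb : b ≤ 0) (hβ : 0 < β) :
    StrictAntiOn (fun x => c + b * x + β / 2 * x ^ 2) (Iic 0) := by
  intro x hx y hy hxy
  have hx : x < 0 := hxy.trans_le hy
  have hy : y ≤ 0 := hy
  -- the difference of values factors as `(x - y) * (b + β / 2 * (x + y))`
  nlinarith [mul_pos (sub_pos.mpr hxy) hβ]

end Quadratic

theorem quadratic_extension_in_class_general
    (β : ℝ) (hβ : 0 < β)
    (φ φ' : ℝ → ℝ)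
    (hderiv : ∀ x, 0 ≤ x → HasDerivAt φ (φ' x) x)
    (hnonneg : ∀ x, 0 ≤ x → 0 ≤ φ x)
    (hsmooth : ∀ x y, 0 ≤ x → 0 ≤ y → |φ' x - φ' y| ≤ β * |x - y|)
    (hconv : ConvexOn ℝ (Set.Ici 0) φ)
    (hanti : StrictAntiOn φ (Set.Ici 0))
    (ℓ : ℝ → ℝ)
    (hℓ : ∀ x, ℓ x = if 0 ≤ x then φ x else φ 0 + φ' 0 * x + β / 2 * x ^ 2) :
    (∀ x, 0 ≤ ℓ x) ∧
    ConvexOn ℝ Set.univ ℓ ∧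
    StrictAnti ℓ ∧
    ∃ ℓ' : ℝ → ℝ, (∀ x, HasDerivAt ℓ (ℓ' x) x) ∧ Continuous ℓ' ∧
      (∀ x y, |ℓ' x - ℓ' y| ≤ β * |x - y|) := by
  obtain rfl : ℓ = _ := funext hℓ
  have hφ'0 : φ' 0 ≤ 0 := (hconv.hasDerivAt_neg_of_strictAntiOn hanti self_mem_Ici
    (mem_Ici.mpr zero_le_one) zero_lt_one (hderiv 0 le_rfl)).le
  set ℓ' := fun x => if 0 ≤ x then φ' x else φ' 0 + β * x
  have hℓ' : ∀ x, HasDerivAt _ (ℓ' x) x := hasDerivAt_ite_le hderiv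
    (fun x _ => hasDerivAt_quadratic _ _ _ x) (by ring) (by ring)
  have hLip : ∀ x y, |ℓ' x - ℓ' y| ≤ β * |x - y| := abs_sub_ite_le_mul hsmooth
    (fun x y _ _ => by rw [add_sub_add_left_eq_sub, ← mul_sub, abs_mul, abs_of_pos hβ])
    (by ring)
  have hφ'mono : MonotoneOn φ' (Ici 0) := (hconv.monotoneOn_deriv fun x hx =>
    (hderiv x hx).differentiableAt).congr fun x hx => (hderiv x hx).deriv
  refine ⟨fun x => ?_, ?_, strictAnti_ite_le hanti (strictAntiOn_quadratic hφ'0 hβ) (by ring),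
    ℓ', hℓ', ?_, hLip⟩
  · dsimp only
    split_ifs with hx
    exacts [hnonneg x hx, quadratic_nonneg_of_nonpos (hnonneg 0 le_rfl) hφ'0 hβ.le (not_le.mp hx).le]
  · refine Monotone.convexOn_univ_of_deriv (fun x => (hℓ' x).differentiableAt) ?_
    rw [show deriv _ = ℓ' from funext fun x => (hℓ' x).deriv]
    exact monotone_ite_le hφ'mono
      (fun x _ y _ hxy => by gcongr) (by ring)
  · exact (LipschitzWith.of_dist_le_mul (K := β.toNNReal) fun x y => by
      simpa only [Real.dist_eq, Real.coe_toNNReal β hβ.le] using hLip x y).continuous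

theorem quadratic_extension_in_class
    (β : ℝ) (hβ : 0 < β)
    (φ φ' : ℝ → ℝ)
    (hderiv : ∀ x, 0 ≤ x → HasDerivAt φ (φ' x) x)
    (hnonneg : ∀ x, 0 ≤ x → 0 ≤ φ x)
    (hlip : ∀ x, 0 ≤ x → |φ' x| ≤ 1)
    (hsmooth : ∀ x y, 0 ≤ x → 0 ≤ y → |φ' x - φ' y| ≤ β * |x - y|)
    (hconv : ConvexOn ℝ (Set.Ici 0) φ)
    (hanti : StrictAntiOn φ (Set.Ici 0))
    (hlim : Filter.Tendsto φ Filter.atTop (nhds 0))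
    (hφ0 : 1 / 2 ≤ φ 0)
    (hφ'0 : 1 / 2 ≤ |φ' 0|)
    (ℓ : ℝ → ℝ)
    (hℓ : ∀ x, ℓ x = if 0 ≤ x then φ x else φ 0 + φ' 0 * x + β / 2 * x ^ 2) :
    (∀ x, 0 ≤ ℓ x) ∧
    ConvexOn ℝ Set.univ ℓ ∧
    StrictAnti ℓ ∧
    ∃ ℓ' : ℝ → ℝ, (∀ x, HasDerivAt ℓ (ℓ' x) x) ∧ Continuous ℓ' ∧
      (∀ x y, |ℓ' x - ℓ' y| ≤ β * |x - y|) :=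
  quadratic_extension_in_class_general β hβ φ φ' hderiv hnonneg hsmooth hconv hanti ℓ hℓ
end

section
/- Let D be a distribution over {z_1, z_2, z_3} with D(z_1) = (59/64)(1−1/n), D(z_2) = (5/64)(1−1/n), D(z_3) = 1/n, and let S be an i.i.d. sample of size n ≥ 35 from D and z' an independent draw. Let δ_2 be the fraction of z_2 in S. Then Pr(z' = z_3, z_3 ∉ S, and δ_2 ∈ [1/32, 1/8]) ≥ 1/(120en). -/
/-!
By independence of `z'`, the event has probability `D{z₃} · Dⁿ(F) = Dⁿ(F) / n`, where `F` is the set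
of samples avoiding `z₃` with a fraction of `z₂` in `[1/32, 1/8]`. Such a sample is two-valued, so
`Dⁿ(F) = (1 - 1/n)ⁿ · Pr(Bin(n, 5/64)/n ∈ [1/32, 1/8])`. Chebyshev's inequality with the binomial
variance `n · (5/64) · (59/64)` and deviation `3n/64` bounds the binomial probability below by
`1 - 295/(9n) ≥ 4/63`, and `(1 - 1/n)^(n-1) ≥ 1/e` gives `(1 - 1/n)ⁿ ≥ 34/(35e)`. Finally
`4/63 · 34/35 ≥ 1/120`.
-/

open MeasureTheory Finset

section Binomial

variable (n : ℕ) (p : ℝ)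

theorem sum_choose_mul_pow_mul_one_sub_pow :
    ∑ k ∈ range (n + 1), (n.choose k : ℝ) * p ^ k * (1 - p) ^ (n - k) = 1 := by
  simpa [bernsteinPolynomial, Polynomial.eval_finsetSum] using
    congrArg (Polynomial.eval p) (bernsteinPolynomial.sum ℝ n)

theorem sum_sq_sub_mul_choose_mul_pow_mul_one_sub_pow :
    ∑ k ∈ range (n + 1), (n * p - k) ^ 2 * ((n.choose k : ℝ) * p ^ k * (1 - p) ^ (n - k)) =
      n * p * (1 - p) := by
  simpa [bernsteinPolynomial, Polynomial.eval_finsetSum] using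
    congrArg (Polynomial.eval p) (bernsteinPolynomial.variance ℝ n)

variable {p} in
theorem sum_choose_filter_le_abs_sub_le (hp₀ : 0 ≤ p) (hp₁ : p ≤ 1) {t : ℝ} (ht : 0 < t) :
    ∑ k ∈ (range (n + 1)).filter fun k : ℕ => t ≤ |(k - n * p : ℝ)|,
      (n.choose k : ℝ) * p ^ k * (1 - p) ^ (n - k) ≤
      n * p * (1 - p) / t ^ 2 := by
  have hp₁' : 0 ≤ 1 - p := sub_nonneg.2 hp₁
  rw [le_div_iff₀ (by positivity), sum_mul,
    ← sum_sq_sub_mul_choose_mul_pow_mul_one_sub_pow, sum_filter]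
  refine sum_le_sum fun k _ => ?_
  split_ifs with hk
  · have ht_sq : t ^ 2 ≤ (n * p - k) ^ 2 := by
      rw [← sq_abs (n * p - k), abs_sub_comm]; gcongr
    rw [mul_comm]
    gcongr
  · positivity

variable {p} in
theorem one_sub_div_sq_le_sum_choose_filter_abs_sub_lt (hp₀ : 0 ≤ p) (hp₁ : p ≤ 1) {t : ℝ}
    (ht : 0 < t) :
    1 - n * p * (1 - p) / t ^ 2 ≤
      ∑ k ∈ (range (n + 1)).filter fun k : ℕ => |(k - n * p : ℝ)| < t,
        (n.choose k : ℝ) * p ^ k * (1 - p) ^ (n - k) := by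
  have hsplit := sum_filter_add_sum_filter_not (range (n + 1)) (fun k : ℕ => |k - n * p| < t)
    fun k => (n.choose k : ℝ) * p ^ k * (1 - p) ^ (n - k)
  simp only [not_lt] at hsplit
  linarith [sum_choose_mul_pow_mul_one_sub_pow n p, sum_choose_filter_le_abs_sub_le n hp₀ hp₁ ht]

theorem sum_choose_mul_mul_pow_mul_mul_pow {s : Finset ℕ} (hs : s ⊆ range (n + 1)) (q a b : ℝ) :
    ∑ k ∈ s, (n.choose k : ℝ) * (q * a) ^ k * (q * b) ^ (n - k) =
      q ^ n * ∑ k ∈ s, (n.choose k : ℝ) * a ^ k * b ^ (n - k) := by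
  rw [mul_sum]
  refine sum_congr rfl fun k hk => ?_
  have hkn : k ≤ n := Nat.lt_succ_iff.1 (mem_range.1 (hs hk))
  rw [mul_pow, mul_pow, ← Nat.add_sub_cancel' hkn, pow_add, Nat.add_sub_cancel_left]
  ring

end Binomial

theorem four_div_sixtyThree_le_sum_choose_filter_div_mem_Icc {n : ℕ} (hn : 35 ≤ n) :
    4 / 63 ≤ ∑ k ∈ (range (n + 1)).filter fun k : ℕ => (k / n : ℝ) ∈ Set.Icc (1 / 32) (1 / 8),
      (n.choose k : ℝ) * (5 / 64) ^ k * (1 - 5 / 64) ^ (n - k) := by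
  have hn' : (35 : ℝ) ≤ n := by exact_mod_cast hn
  have hnpos : (0 : ℝ) < n := by linarith
  have hvar : n * (5 / 64) * (1 - 5 / 64) / (3 * n / 64) ^ 2 = (295 / 9 : ℝ) / n := by
    field_simp; ring
  calc (4 / 63 : ℝ) ≤ 1 - n * (5 / 64) * (1 - 5 / 64) / (3 * n / 64) ^ 2 := by
        rw [hvar, le_sub_comm, div_le_iff₀ hnpos]
        linarith
    _ ≤ _ := one_sub_div_sq_le_sum_choose_filter_abs_sub_lt n (by norm_num) (by norm_num)
        (by positivity)
    _ ≤ _ := by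
        refine sum_le_sum_of_subset_of_nonneg (monotone_filter_right _ fun k _ hk => ?_)
          fun k _ _ => by positivity
        rw [abs_lt] at hk
        constructor
        · rw [le_div_iff₀ hnpos]; linarith
        · rw [div_le_iff₀ hnpos]; linarith

theorem inv_exp_le_one_sub_inv_pow_pred (n : ℕ) : (Real.exp 1)⁻¹ ≤ (1 - (n : ℝ)⁻¹) ^ (n - 1) := by
  rcases n with _ | _ | m
  · exact inv_le_one_of_one_le₀ (Real.one_le_exp zero_le_one)
  · exact inv_le_one_of_one_le₀ (Real.one_le_exp zero_le_one)
  · have hbase : 1 - ((m + 1 + 1 : ℕ) : ℝ)⁻¹ = (1 + ((m + 1 : ℕ) : ℝ)⁻¹)⁻¹ := by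
      field_simp; push_cast; ring
    rw [hbase, Nat.add_sub_cancel, inv_pow]
    exact inv_anti₀ (by positivity) Real.one_add_inv_pow_le_exp

theorem measureReal_pi_setOf_card_eq {ι α : Type*} [Fintype ι] [MeasurableSpace α]
    [MeasurableSingletonClass α] [DecidableEq α] (μ : Measure α) [IsFiniteMeasure μ]
    {x y : α} (hxy : x ≠ y) (P : ℕ → Prop) [DecidablePred P] :
    (Measure.pi fun _ : ι => μ).real {s | (∀ i, s i = x ∨ s i = y) ∧ P #{i | s i = y}} =
      ∑ k ∈ range (Fintype.card ι + 1) with P k,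
        (Fintype.card ι).choose k * μ.real {y} ^ k * μ.real {x} ^ (Fintype.card ι - k) := by
  classical
  -- a two-valued sample is encoded by the set of positions where it takes the value `y`
  set e : Finset ι → ι → α := fun T i => if i ∈ T then y else x
  have he_filter (T : Finset ι) : ({i | e T i = y} : Finset ι) = T := by
    ext i; by_cases hi : i ∈ T <;> simp [e, hi, hxy]
  have he_inj : Function.Injective e := fun T T' h => by
    rw [← he_filter T, ← he_filter T', h]
  have hset : {s : ι → α | (∀ i, s i = x ∨ s i = y) ∧ P #{i | s i = y}} =
      ↑((univ.filter fun T : Finset ι => P #T).image e) := by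
    ext s
    simp only [Set.mem_ofPred_eq, coe_image, coe_filter, mem_univ, true_and, Set.mem_image]
    constructor
    · rintro ⟨hs, hP⟩
      refine ⟨({i | s i = y} : Finset ι), hP, funext fun i => ?_⟩
      rcases hs i with h | h <;> simp [e, h, hxy]
    · rintro ⟨T, hT, rfl⟩
      refine ⟨fun i => ?_, by rwa [he_filter]⟩
      by_cases hi : i ∈ T <;> simp [e, hi]
  have hsingle (T : Finset ι) : (Measure.pi fun _ : ι => μ).real {e T} =
      μ.real {y} ^ #T * μ.real {x} ^ (Fintype.card ι - #T) := by
    have hfactor (i : ι) : (μ {e T i}).toReal = if i ∈ T then μ.real {y} else μ.real {x} := by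
      by_cases hi : i ∈ T <;> simp [e, hi, measureReal_def]
    rw [measureReal_def, Measure.pi_singleton, ENNReal.toReal_prod, prod_congr rfl fun i _ =>
      hfactor i, prod_ite, prod_const, prod_const, filter_mem_eq_inter, univ_inter, filter_not,
      filter_mem_eq_inter, univ_inter, ← compl_eq_univ_sdiff, card_compl]
  rw [hset, ← sum_measureReal_singleton, sum_image fun T _ T' _ h => he_inj h]
  simp_rw [hsingle]
  rw [sum_filter, ← powerset_univ, sum_powerset_apply_card
    (fun k => if P k then μ.real {y} ^ k * μ.real {x} ^ (Fintype.card ι - k) else 0),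
    card_univ, sum_filter]
  refine sum_congr rfl fun k _ => ?_
  split_ifs <;> simp [mul_assoc]

theorem prob_good_event_lower_bound (n : ℕ) (hn : 35 ≤ n)
    (D : Measure (Fin 3)) [IsProbabilityMeasure D]
    (h1 : D {0} = ENNReal.ofReal ((59 / 64) * (1 - 1 / (n : ℝ))))
    (h2 : D {1} = ENNReal.ofReal ((5 / 64) * (1 - 1 / (n : ℝ))))
    (h3 : D {2} = ENNReal.ofReal (1 / (n : ℝ))) :
    ENNReal.ofReal (1 / (120 * Real.exp 1 * n)) ≤
      ((Measure.pi fun _ : Fin n => D).prod D)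
        {p : (Fin n → Fin 3) × Fin 3 | p.2 = 2 ∧ (∀ i, p.1 i ≠ 2) ∧
          (1 / 32 : ℝ) ≤ ((Finset.univ.filter fun i => p.1 i = 1).card : ℝ) / n ∧
          ((Finset.univ.filter fun i => p.1 i = 1).card : ℝ) / n ≤ 1 / 8} := by
  set q : ℝ := 1 - 1 / n with hq_def
  have hq : 34 / 35 ≤ q := by
    rw [hq_def, one_div]
    linarith [inv_anti₀ (by norm_num : (0 : ℝ) < 35) (by exact_mod_cast hn : (35 : ℝ) ≤ n)]
  have hevent : {p : (Fin n → Fin 3) × Fin 3 | p.2 = 2 ∧ (∀ i, p.1 i ≠ 2) ∧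
        (1 / 32 : ℝ) ≤ ((Finset.univ.filter fun i => p.1 i = 1).card : ℝ) / n ∧
        ((Finset.univ.filter fun i => p.1 i = 1).card : ℝ) / n ≤ 1 / 8} =
      {s : Fin n → Fin 3 | (∀ i, s i = 0 ∨ s i = 1) ∧
        (#{i | s i = 1} / n : ℝ) ∈ Set.Icc (1 / 32) (1 / 8)} ×ˢ {2} := by
    have hne_two : ∀ a : Fin 3, a ≠ 2 ↔ a = 0 ∨ a = 1 := by decide
    ext ⟨s, z⟩
    simp only [Set.mem_ofPred_eq, Set.mem_prod, Set.mem_singleton_iff, Set.mem_Icc, hne_two]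
    tauto
  have hD0 : D.real {0} = q * (1 - 5 / 64) := by
    rw [measureReal_def, h1, ENNReal.toReal_ofReal (by linarith)]; ring
  have hD1 : D.real {1} = q * (5 / 64) := by
    rw [measureReal_def, h2, ENNReal.toReal_ofReal (by linarith)]; ring
  have hD2 : D.real {2} = 1 / n := by
    rw [measureReal_def, h3, ENNReal.toReal_ofReal (by positivity)]
  have hpow : 34 / 35 * (Real.exp 1)⁻¹ ≤ q ^ n := by
    rw [← Nat.sub_add_cancel (by omega : 1 ≤ n), pow_succ, mul_comm]
    exact mul_le_mul (by simpa [hq_def] using inv_exp_le_one_sub_inv_pow_pred n) hq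
      (by norm_num) (pow_nonneg (by linarith) _)
  rw [hevent, Measure.prod_prod, ← ofReal_measureReal, ← ofReal_measureReal,
    ← ENNReal.ofReal_mul measureReal_nonneg, measureReal_pi_setOf_card_eq D (by decide)
      fun k : ℕ => (k / n : ℝ) ∈ Set.Icc (1 / 32) (1 / 8),
    Fintype.card_fin, hD0, hD1, hD2, sum_choose_mul_mul_pow_mul_mul_pow n (filter_subset _ _)]
  refine ENNReal.ofReal_le_ofReal ?_
  have he : 0 < (Real.exp 1)⁻¹ := inv_pos.2 (Real.exp_pos 1)
  calc 1 / (120 * Real.exp 1 * n) = 1 / 120 * (Real.exp 1)⁻¹ * (1 / n) := by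
        field_simp
    _ ≤ 34 / 35 * (Real.exp 1)⁻¹ * (4 / 63) * (1 / n) := by
        gcongr ?_ * _; linarith
    _ ≤ _ := by
        gcongr
        exact four_div_sixtyThree_le_sum_choose_filter_div_mem_Icc hn
end
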